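/- arXiv:2409.08430 — 4 statements merged into one kernel-verified Lean document; each statement's English description precedes it below -/
import Mathlib

section
/- If for all i, s_i(0), x_i(0) ∈ [0,1] with s_i(0)+x_i(0) ≤ 1, and w_j(0) ≥ 0 for all j, then for all t ≥ 0 the solution of the multilayer SIR system satisfies x_i(t) ∈ [0,1], s_i(t) ∈ [0,1], s_i(t)+x_i(t) ≤ 1 for all population nodes i, and w_j(t) ≥ 0 for all resource nodes j. -/
open Matrix BigOperators Set

noncomputable def specRad {N : Type*} [Fintype N] [DecidableEq N] (M : Matrix N N ℝ) : ℝ :=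
  sSup {r : ℝ | ∃ μ ∈ spectrum ℂ (M.map (Complex.ofReal ·)), r = ‖μ‖}

noncomputable def lamMax {N : Type*} [Fintype N] [DecidableEq N] (M : Matrix N N ℝ) : ℝ :=
  sSup {r : ℝ | ∃ μ ∈ spectrum ℂ (M.map (Complex.ofReal ·)), r = μ.re}

def Irred {N : Type*} [Fintype N] [DecidableEq N] (M : Matrix N N ℝ) : Prop :=
  ∀ i j : N, ∃ k : ℕ, 0 < (M ^ k) i j

/-!
The susceptible compartment solves the scalar linear equation `s' = -h(t) s`, so its sign is
preserved. Once `s ≥ 0`, the pair `(x, w)` solves a linear system `z' = A(t) z - d ⊙ z` whose matrix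
`A(t)` is entrywise nonnegative (a Metzler system), and such systems leave the nonnegative orthant
invariant: perturbing `z` by `ε e^{(c+1)t}` makes every component strictly positive up to the first
time one of them vanishes, where its derivative would have to be both positive and nonpositive.
Finally `(s + x)' = -γ x ≤ 0`, so `s + x` never exceeds its initial value.
-/

open Filter Topology Real

theorem HasDerivAt.nonpos_of_eventually_le_left {f : ℝ → ℝ} {f' a : ℝ} (hf : HasDerivAt f f' a)
    (h : ∀ᶠ x in 𝓝[<] a, f a ≤ f x) : f' ≤ 0 := by
  have hslope : Tendsto (slope f a) (𝓝[<] a) (𝓝 f') :=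
    (hasDerivWithinAt_iff_tendsto_slope' (s := Iio a) (lt_irrefl a)).1 hf.hasDerivWithinAt
  refine le_of_tendsto hslope ?_
  filter_upwards [h, self_mem_nhdsWithin] with x hx hxa
  rw [slope_def_field]
  exact div_nonpos_of_nonneg_of_nonpos (sub_nonneg.2 hx) (sub_nonpos.2 (le_of_lt hxa))

theorem pos_of_hasDerivAt_of_deriv_pos_at_boundary {ι : Type*} [Finite ι] {u u' : ℝ → ι → ℝ} {T : ℝ}
    (hu : ∀ i t, HasDerivAt (fun τ => u τ i) (u' t i) t)
    (hu' : ∀ t ∈ Ioc 0 T, ∀ i, u t i = 0 → (∀ j, 0 ≤ u t j) → 0 < u' t i)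
    (h0 : ∀ i, 0 < u 0 i) : ∀ t ∈ Icc 0 T, ∀ i, 0 < u t i := by
  have hcont : ∀ i, Continuous fun τ => u τ i := fun i =>
    continuous_iff_continuousAt.2 fun t => (hu i t).continuousAt
  by_contra! hbad
  obtain ⟨t₁, ht₁, i₁, hi₁⟩ := hbad
  have hS : IsCompact (Icc 0 T ∩ ⋃ i, {τ | u τ i ≤ 0}) :=
    isCompact_Icc.inter_right
      (isClosed_iUnion_of_finite fun i => isClosed_le (hcont i) continuous_const)
  obtain ⟨t₀, ⟨⟨ht₀0, ht₀T⟩, hmem⟩, hleast⟩ := hS.exists_isLeast ⟨t₁, ht₁, mem_iUnion.2 ⟨i₁, hi₁⟩⟩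
  obtain ⟨i, hi⟩ := mem_iUnion.1 hmem
  have ht₀pos : 0 < t₀ := ht₀0.lt_of_ne (by rintro rfl; exact (h0 i).not_ge hi)
  have hleft : ∀ j, ∀ᶠ τ in 𝓝[<] t₀, 0 < u τ j := fun j => by
    filter_upwards [Ioo_mem_nhdsLT ht₀pos] with τ hτ
    by_contra! h
    exact hτ.2.not_ge (hleast ⟨⟨hτ.1.le, hτ.2.le.trans ht₀T⟩, mem_iUnion.2 ⟨j, h⟩⟩)
  have hge : ∀ j, 0 ≤ u t₀ j := fun j =>
    ge_of_tendsto (((hcont j).tendsto t₀).mono_left nhdsWithin_le_nhds)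
      ((hleft j).mono fun _ => le_of_lt)
  have hzero : u t₀ i = 0 := le_antisymm hi (hge i)
  have hderiv := (hu i t₀).nonpos_of_eventually_le_left
    ((hleft i).mono fun τ hτ => hzero ▸ hτ.le)
  exact hderiv.not_gt (hu' t₀ ⟨ht₀pos, ht₀T⟩ i hzero hge)

theorem nonneg_of_hasDerivAt_of_quasipositive {ι : Type*} [Finite ι] {z z' : ℝ → ι → ℝ} {T c : ℝ}
    (hz : ∀ i t, HasDerivAt (fun τ => z τ i) (z' t i) t)
    (hz' : ∀ t ∈ Icc 0 T, ∀ i, z t i < 0 → (∀ j, z t i ≤ z t j) → c * z t i ≤ z' t i)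
    (h0 : ∀ i, 0 ≤ z 0 i) : ∀ t ∈ Icc 0 T, ∀ i, 0 ≤ z t i := by
  have hpert : ∀ ε > 0, ∀ t ∈ Icc 0 T, ∀ i, 0 < z t i + ε * exp ((c + 1) * t) := by
    intro ε hε
    refine pos_of_hasDerivAt_of_deriv_pos_at_boundary
      (u' := fun t i => z' t i + ε * (exp ((c + 1) * t) * (c + 1))) (fun i t => ?_)
      (fun t ht i hzero hmin => ?_) (fun i => ?_)
    · exact (hz i t).add ((((hasDerivAt_id t).const_mul (c + 1)).exp.const_mul ε).congr_deriv
        (by simp))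
    · have hzi : z t i = -(ε * exp ((c + 1) * t)) := by linarith
      have hpos : 0 < ε * exp ((c + 1) * t) := by positivity
      have hquasi := hz' t (Ioc_subset_Icc_self ht) i (by linarith) (fun j => by linarith [hmin j])
      rw [hzi] at hquasi
      linarith
    · simpa using add_pos_of_nonneg_of_pos (h0 i) hε
  intro t ht i
  refine le_of_forall_pos_lt_add fun δ hδ => ?_
  have := hpert (δ / exp ((c + 1) * t)) (by positivity) t ht i
  rwa [div_mul_cancel₀ _ (exp_pos _).ne'] at this

theorem nonneg_of_hasDerivAt_mulVec_sub {ι : Type*} [Fintype ι] {z : ℝ → ι → ℝ}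
    {A : ℝ → Matrix ι ι ℝ} {d : ℝ → ι → ℝ} (hA : ∀ t, 0 ≤ t → ∀ i j, 0 ≤ A t i j)
    (hAc : Continuous A) (hdc : Continuous d)
    (hz : ∀ i t, HasDerivAt (fun τ => z τ i) ((A t *ᵥ z t) i - d t i * z t i) t)
    (h0 : ∀ i, 0 ≤ z 0 i) : ∀ t, 0 ≤ t → ∀ i, 0 ≤ z t i := by
  intro T hT
  obtain ⟨c, hc⟩ := isCompact_Icc.exists_bound_of_continuousOn (s := Icc 0 T)
    ((hAc.matrix_mulVec continuous_const).sub hdc).continuousOn (f := fun t => A t *ᵥ 1 - d t)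
  refine nonneg_of_hasDerivAt_of_quasipositive (c := c) hz (fun t ht i hneg hmin => ?_) h0 T
    ⟨hT, le_rfl⟩
  have hrow : (A t *ᵥ 1) i - d t i ≤ c :=
    (le_abs_self _).trans ((norm_le_pi_norm _ i).trans (hc t ht))
  have hmul : (A t *ᵥ 1) i * z t i ≤ (A t *ᵥ z t) i := by
    simp only [mulVec, dotProduct, Pi.one_apply, mul_one, Finset.sum_mul]
    exact Finset.sum_le_sum fun j _ => mul_le_mul_of_nonneg_left (hmin j) (hA t ht.1 i j)
  have := mul_le_mul_of_nonpos_right hrow hneg.le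
  rw [sub_mul] at this
  linarith

theorem continuous_of_forall_hasDerivAt_apply {ι : Type*} [Fintype ι] {z z' : ℝ → ι → ℝ}
    (hz : ∀ i t, HasDerivAt (fun τ => z τ i) (z' t i) t) : Continuous z :=
  continuous_iff_continuousAt.2 fun t => (hasDerivAt_pi.2 fun i => hz i t).continuousAt

section MultilayerSIR

variable {n m : ℕ} {β : Fin n → Fin n → ℝ} {βw c : Fin n → Fin m → ℝ} {α : Fin m → Fin m → ℝ}
  {γ : Fin n → ℝ} {γw : Fin m → ℝ} {s x : ℝ → Fin n → ℝ} {w : ℝ → Fin m → ℝ}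

theorem sir_susceptible_nonneg
    (hs : ∀ i t, HasDerivAt (fun τ => s τ i)
      (-(s t i) * ((∑ j, β i j * x t j) + ∑ j, βw i j * w t j)) t)
    (hxc : Continuous x) (hwc : Continuous w) (hs0 : ∀ i, 0 ≤ s 0 i) :
    ∀ t, 0 ≤ t → ∀ i, 0 ≤ s t i :=
  nonneg_of_hasDerivAt_mulVec_sub (A := fun _ => 0) (d := fun t => β *ᵥ x t + βw *ᵥ w t)
    (fun _ _ _ _ => le_rfl) continuous_const
    ((continuous_const.matrix_mulVec hxc).add (continuous_const.matrix_mulVec hwc))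
    (fun i t => (hs i t).congr_deriv (by
      rw [zero_mulVec, Pi.zero_apply, zero_sub, neg_mul, mul_comm]; rfl)) hs0

theorem sir_infected_resource_nonneg (hβ : ∀ i j, 0 ≤ β i j) (hβw : ∀ i j, 0 ≤ βw i j)
    (hc : ∀ k j, 0 ≤ c k j) (hα : ∀ k j, 0 ≤ α k j) (hsc : Continuous s)
    (hs_nonneg : ∀ t, 0 ≤ t → ∀ i, 0 ≤ s t i)
    (hx : ∀ i t, HasDerivAt (fun τ => x τ i)
      ((s t i) * ((∑ j, β i j * x t j) + ∑ j, βw i j * w t j) - γ i * x t i) t)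
    (hw : ∀ j t, HasDerivAt (fun τ => w τ j)
      (-(γw j) * w t j + (∑ k, α k j * w t k) - w t j * (∑ k, α j k)
        + ∑ k, c k j * x t k) t)
    (hx0 : ∀ i, 0 ≤ x 0 i) (hw0 : ∀ j, 0 ≤ w 0 j) :
    ∀ t, 0 ≤ t → ∀ k, 0 ≤ Sum.elim (x t) (w t) k := by
  refine nonneg_of_hasDerivAt_mulVec_sub
    (A := fun t => fromBlocks (diagonal (s t) * of β) (diagonal (s t) * of βw) (of c)ᵀ (of α)ᵀ)
    (d := fun _ => Sum.elim γ fun j => γw j + ∑ k, α j k) ?_ ?_ continuous_const ?_ ?_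
  · rintro t ht (i | j) (k | k)
    · simpa [diagonal_mul] using mul_nonneg (hs_nonneg t ht i) (hβ i k)
    · simpa [diagonal_mul] using mul_nonneg (hs_nonneg t ht i) (hβw i k)
    · simpa using hc k j
    · simpa using hα k j
  · fun_prop
  · rintro (i | j) t
    · exact (hx i t).congr_deriv (by
      simp only [mulVec, dotProduct, Fintype.sum_sum_type, fromBlocks_apply₁₁, fromBlocks_apply₁₂,
        diagonal_mul, of_apply, Sum.elim_inl, Sum.elim_inr, mul_assoc, mul_add, Finset.mul_sum])
    · exact (hw j t).congr_deriv (by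
      simp only [mulVec, dotProduct, Fintype.sum_sum_type, fromBlocks_apply₂₁, fromBlocks_apply₂₂,
        transpose_apply, of_apply, Sum.elim_inl, Sum.elim_inr]
      ring)
  · rintro (i | j)
    exacts [hx0 i, hw0 j]

theorem sir_susceptible_add_infected_le_one (hγ : ∀ i, 0 ≤ γ i)
    (hs : ∀ i t, HasDerivAt (fun τ => s τ i)
      (-(s t i) * ((∑ j, β i j * x t j) + ∑ j, βw i j * w t j)) t)
    (hx : ∀ i t, HasDerivAt (fun τ => x τ i)
      ((s t i) * ((∑ j, β i j * x t j) + ∑ j, βw i j * w t j) - γ i * x t i) t)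
    (hx_nonneg : ∀ t, 0 ≤ t → ∀ i, 0 ≤ x t i) (hsx0 : ∀ i, s 0 i + x 0 i ≤ 1) :
    ∀ t, 0 ≤ t → ∀ i, s t i + x t i ≤ 1 := by
  intro t ht i
  have hderiv : ∀ τ, HasDerivAt (fun σ => s σ i + x σ i) (-(γ i * x τ i)) τ := fun τ =>
    ((hs i τ).add (hx i τ)).congr_deriv (by ring)
  have hanti : AntitoneOn (fun σ => s σ i + x σ i) (Ici 0) :=
    antitoneOn_of_hasDerivWithinAt_nonpos (convex_Ici 0)
      (HasDerivAt.continuousOn fun τ _ => hderiv τ) (fun τ _ => (hderiv τ).hasDerivWithinAt)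
      fun τ hτ => neg_nonpos.2 (mul_nonneg (hγ i) (hx_nonneg τ (interior_subset hτ) i))
  exact (hanti self_mem_Ici ht ht).trans (hsx0 i)

end MultilayerSIR

theorem multilayer_sir_invariance_general (n m : ℕ)
    (β : Fin n → Fin n → ℝ) (βw : Fin n → Fin m → ℝ)
    (c : Fin n → Fin m → ℝ) (α : Fin m → Fin m → ℝ)
    (γ : Fin n → ℝ) (γw : Fin m → ℝ)
    (hβ : ∀ i j, 0 ≤ β i j) (hβw : ∀ i j, 0 ≤ βw i j)
    (hc : ∀ k j, 0 ≤ c k j) (hα : ∀ k j, 0 ≤ α k j)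
    (hγ : ∀ i, 0 < γ i)
    (s x : ℝ → Fin n → ℝ) (w : ℝ → Fin m → ℝ)
    (hs : ∀ i t, HasDerivAt (fun τ => s τ i)
      (-(s t i) * ((∑ j, β i j * x t j) + ∑ j, βw i j * w t j)) t)
    (hx : ∀ i t, HasDerivAt (fun τ => x τ i)
      ((s t i) * ((∑ j, β i j * x t j) + ∑ j, βw i j * w t j) - γ i * x t i) t)
    (hw : ∀ j t, HasDerivAt (fun τ => w τ j)
      (-(γw j) * w t j + (∑ k, α k j * w t k) - w t j * (∑ k, α j k)
        + ∑ k, c k j * x t k) t)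
    (hs0 : ∀ i, s 0 i ∈ Set.Icc (0:ℝ) 1) (hx0 : ∀ i, x 0 i ∈ Set.Icc (0:ℝ) 1)
    (hsx0 : ∀ i, s 0 i + x 0 i ≤ 1) (hw0 : ∀ j, 0 ≤ w 0 j) :
    ∀ t, 0 ≤ t →
      (∀ i, x t i ∈ Set.Icc (0:ℝ) 1 ∧ s t i ∈ Set.Icc (0:ℝ) 1 ∧ s t i + x t i ≤ 1) ∧
      (∀ j, 0 ≤ w t j) := by
  have hs_nonneg := sir_susceptible_nonneg hs (continuous_of_forall_hasDerivAt_apply hx)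
    (continuous_of_forall_hasDerivAt_apply hw) fun i => (hs0 i).1
  have hxw_nonneg := sir_infected_resource_nonneg hβ hβw hc hα
    (continuous_of_forall_hasDerivAt_apply hs) hs_nonneg hx hw (fun i => (hx0 i).1) hw0
  have hx_nonneg : ∀ t, 0 ≤ t → ∀ i, 0 ≤ x t i := fun t ht i => hxw_nonneg t ht (.inl i)
  have hsx := sir_susceptible_add_infected_le_one (fun i => (hγ i).le) hs hx hx_nonneg hsx0
  intro t ht
  refine ⟨fun i => ?_, fun j => hxw_nonneg t ht (.inr j)⟩
  have hsi := hs_nonneg t ht i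
  have hxi := hx_nonneg t ht i
  have hsxi := hsx t ht i
  exact ⟨⟨hxi, by linarith⟩, ⟨hsi, by linarith⟩, hsxi⟩

/-- positivity/invariance of the multilayer SIR model. -/
theorem multilayer_sir_invariance (n m : ℕ)
    (β : Fin n → Fin n → ℝ) (βw : Fin n → Fin m → ℝ)
    (c : Fin n → Fin m → ℝ) (α : Fin m → Fin m → ℝ)
    (γ : Fin n → ℝ) (γw : Fin m → ℝ)
    (hβ : ∀ i j, 0 ≤ β i j) (hβw : ∀ i j, 0 ≤ βw i j)
    (hc : ∀ k j, 0 ≤ c k j) (hα : ∀ k j, 0 ≤ α k j)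
    (hγ : ∀ i, 0 < γ i) (hd : ∀ j, 0 < γw j - α j j + ∑ k, α k j)
    (s x : ℝ → Fin n → ℝ) (w : ℝ → Fin m → ℝ)
    (hs : ∀ i t, HasDerivAt (fun τ => s τ i)
      (-(s t i) * ((∑ j, β i j * x t j) + ∑ j, βw i j * w t j)) t)
    (hx : ∀ i t, HasDerivAt (fun τ => x τ i)
      ((s t i) * ((∑ j, β i j * x t j) + ∑ j, βw i j * w t j) - γ i * x t i) t)
    (hw : ∀ j t, HasDerivAt (fun τ => w τ j)
      (-(γw j) * w t j + (∑ k, α k j * w t k) - w t j * (∑ k, α j k)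
        + ∑ k, c k j * x t k) t)
    (hs0 : ∀ i, s 0 i ∈ Set.Icc (0:ℝ) 1) (hx0 : ∀ i, x 0 i ∈ Set.Icc (0:ℝ) 1)
    (hsx0 : ∀ i, s 0 i + x 0 i ≤ 1) (hw0 : ∀ j, 0 ≤ w 0 j) :
    ∀ t, 0 ≤ t →
      (∀ i, x t i ∈ Set.Icc (0:ℝ) 1 ∧ s t i ∈ Set.Icc (0:ℝ) 1 ∧ s t i + x t i ≤ 1) ∧
      (∀ j, 0 ≤ w t j) :=
  multilayer_sir_invariance_general n m β βw c α γ γw hβ hβw hc hα hγ s x w hs hx hw hs0 hx0 hsx0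
    hw0
end

section
/- Under the irreducibility and positivity assumptions on the parameters and assuming γ^w_j > 0 for all resource nodes j, every equilibrium (s*, x*, w*) of the multilayer SIR system satisfies x* = 0 and w* = 0; that is, all equilibria are healthy equilibria of the form (s*, 0, 0) with s* ∈ [0,1]^n, and no endemic equilibrium with x* ≠ 0 or w* ≠ 0 exists. -/
open Matrix BigOperators Set

/-!
At an equilibrium, adding the `s`- and `x`-equations gives `γ i * x i = 0`, so `x = 0`.
The `w`-equation then reads `(-diag γw + Aw) w = 0`. The matrix `Aw` has nonnegative
off-diagonal entries and zero row sums, so subtracting the positive diagonal `diag γw` makes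
it strictly diagonally dominant, hence nonsingular (Gershgorin), and `w = 0`.
-/

theorem eq_zero_of_sir_equilibrium {s f γ x : ℝ} (hγ : 0 < γ)
    (heq_s : -s * f = 0) (heq_x : s * f - γ * x = 0) : x = 0 := by
  have hγx : γ * x = 0 := by linarith
  exact (mul_eq_zero.mp hγx).resolve_left hγ.ne'

section MatrixLemmas

variable {ι : Type*} [Fintype ι] [DecidableEq ι]

theorem det_neg_diagonal_add_ne_zero_of_metzler {A : Matrix ι ι ℝ} {d : ι → ℝ}
    (hd : ∀ j, 0 < d j) (hoff : ∀ j k, j ≠ k → 0 ≤ A j k) (hrow : ∀ j, ∑ k, A j k ≤ 0) :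
    (-diagonal d + A).det ≠ 0 := by
  refine det_ne_zero_of_sum_row_lt_diag fun j => ?_
  have hsplit := Finset.add_sum_erase Finset.univ (A j) (Finset.mem_univ j)
  have hoff_nonneg : 0 ≤ ∑ k ∈ Finset.univ.erase j, A j k :=
    Finset.sum_nonneg fun k hk => hoff j k (Finset.ne_of_mem_erase hk).symm
  have hoff_sum : ∑ k ∈ Finset.univ.erase j, ‖(-diagonal d + A) j k‖
      = ∑ k ∈ Finset.univ.erase j, A j k := by
    refine Finset.sum_congr rfl fun k hk => ?_
    have hjk : j ≠ k := (Finset.ne_of_mem_erase hk).symm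
    simp only [Matrix.add_apply, Matrix.neg_apply, diagonal_apply_ne d hjk, neg_zero, zero_add,
      Real.norm_eq_abs, abs_of_nonneg (hoff j k hjk)]
  have hdiag : ‖(-diagonal d + A) j j‖ = d j - A j j := by
    simp only [Matrix.add_apply, Matrix.neg_apply, diagonal_apply_eq, Real.norm_eq_abs]
    rw [abs_of_neg (by linarith [hd j, hrow j])]
    ring
  rw [hoff_sum, hdiag]
  linarith [hrow j, hd j]

theorem transition_matrix_offDiag_nonneg {α : ι → ι → ℝ} {Aw : Matrix ι ι ℝ}
    (hα : ∀ k j, 0 ≤ α k j)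
    (hAw : ∀ j k, Aw j k = if j = k then α j j - ∑ l, α l j else α k j) (j k : ι)
    (hjk : j ≠ k) : 0 ≤ Aw j k := by
  rw [hAw, if_neg hjk]
  exact hα k j

theorem transition_matrix_row_sum_eq_zero {α : ι → ι → ℝ} {Aw : Matrix ι ι ℝ}
    (hAw : ∀ j k, Aw j k = if j = k then α j j - ∑ l, α l j else α k j) (j : ι) :
    ∑ k, Aw j k = 0 := by
  have hoff : ∑ k ∈ Finset.univ.erase j, Aw j k = ∑ k ∈ Finset.univ.erase j, α k j :=
    Finset.sum_congr rfl fun k hk => by rw [hAw, if_neg (Finset.ne_of_mem_erase hk).symm]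
  rw [← Finset.add_sum_erase _ _ (Finset.mem_univ j), hoff, hAw, if_pos rfl,
    ← Finset.add_sum_erase _ (fun l => α l j) (Finset.mem_univ j)]
  ring

end MatrixLemmas

theorem equilibria_are_healthy_general (n m : ℕ)
    (B : Matrix (Fin n) (Fin n) ℝ) (Bw : Matrix (Fin n) (Fin m) ℝ)
    (Cw : Matrix (Fin m) (Fin n) ℝ) (α : Fin m → Fin m → ℝ)
    (γ : Fin n → ℝ) (γw : Fin m → ℝ)
    (hα : ∀ k j, 0 ≤ α k j)
    (Aw : Matrix (Fin m) (Fin m) ℝ)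
    (hAw : ∀ j k, Aw j k = if j = k then α j j - ∑ l, α l j else α k j)
    (hγ : ∀ i, 0 < γ i) (hγw : ∀ j, 0 < γw j)
    (s x : Fin n → ℝ) (w : Fin m → ℝ)
    -- equilibrium equations: all time derivatives vanish
    (heq_s : ∀ i, -(s i) * ((B.mulVec x + Bw.mulVec w) i) = 0)
    (heq_x : ∀ i, (s i) * ((B.mulVec x + Bw.mulVec w) i) - γ i * x i = 0)
    (heq_w : (-(Matrix.diagonal γw) + Aw).mulVec w + Cw.mulVec x = 0) :
    x = 0 ∧ w = 0 := by
  have hx : x = 0 := funext fun i => eq_zero_of_sir_equilibrium (hγ i) (heq_s i) (heq_x i)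
  subst hx
  rw [mulVec_zero, add_zero] at heq_w
  have hdet : (-diagonal γw + Aw).det ≠ 0 :=
    det_neg_diagonal_add_ne_zero_of_metzler hγw
      (transition_matrix_offDiag_nonneg hα hAw)
      fun j => (transition_matrix_row_sum_eq_zero hAw j).le
  exact ⟨rfl, eq_zero_of_mulVec_eq_zero hdet heq_w⟩

/-- all equilibria of the multilayer SIR model are healthy. -/
theorem equilibria_are_healthy (n m : ℕ)
    (B : Matrix (Fin n) (Fin n) ℝ) (Bw : Matrix (Fin n) (Fin m) ℝ)
    (Cw : Matrix (Fin m) (Fin n) ℝ) (α : Fin m → Fin m → ℝ)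
    (γ : Fin n → ℝ) (γw : Fin m → ℝ)
    (hB : ∀ i j, 0 ≤ B i j) (hBirr : Irred B)
    (hBw : ∀ i j, 0 ≤ Bw i j) (hBw1 : ∀ i, ∃ j, 0 < Bw i j)
    (hCw : ∀ k j, 0 ≤ Cw k j) (hCw1 : ∀ j, ∃ k, 0 < Cw j k)
    (hα : ∀ k j, 0 ≤ α k j)
    (Aw : Matrix (Fin m) (Fin m) ℝ)
    (hAw : ∀ j k, Aw j k = if j = k then α j j - ∑ l, α l j else α k j)
    (hAirr : Irred (Matrix.of fun j k : Fin m => if j = k then 0 else α k j))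
    (hγ : ∀ i, 0 < γ i) (hγw : ∀ j, 0 < γw j)
    (s x : Fin n → ℝ) (w : Fin m → ℝ)
    (hs : ∀ i, s i ∈ Set.Icc (0:ℝ) 1) (hx : ∀ i, x i ∈ Set.Icc (0:ℝ) 1)
    (hw : ∀ j, 0 ≤ w j)
    -- equilibrium equations: all time derivatives vanish
    (heq_s : ∀ i, -(s i) * ((B.mulVec x + Bw.mulVec w) i) = 0)
    (heq_x : ∀ i, (s i) * ((B.mulVec x + Bw.mulVec w) i) - γ i * x i = 0)
    (heq_w : (-(Matrix.diagonal γw) + Aw).mulVec w + Cw.mulVec x = 0) :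
    x = 0 ∧ w = 0 :=
  equilibria_are_healthy_general n m B Bw Cw α γ γw hα Aw hAw hγ hγw s x w heq_s heq_x heq_w
end

section
/- Let M be a nonnegative irreducible square matrix and D a positive diagonal matrix. Then ρ(D^{-1}M) > 1 if and only if λ_max(M - D) > 0; ρ(D^{-1}M) = 1 if and only if λ_max(M - D) = 0; and ρ(D^{-1}M) < 1 if and only if λ_max(M - D) < 0, where λ_max denotes the largest real part of the eigenvalues. -/
open Matrix BigOperators Set

/-!
Shifting the Metzler matrix `M - D` by a large multiple of the identity gives a primitive
nonnegative matrix, so the Perron–Frobenius argument shows that `λ := λ_max(M - D)` is an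
eigenvalue of `M - D` with an entrywise positive eigenvector `z`. Then `D⁻¹M z = z + λ D⁻¹ z`,
and the Collatz–Wielandt bounds for the nonnegative matrix `D⁻¹M` (`t z ≤ A z` forces
`t ≤ ρ(A)` by Gelfand's formula, `A z ≤ t z` forces `ρ(A) ≤ t` by comparing `z` with the modulus
of an eigenvector of maximal modulus) show that `ρ(D⁻¹M) - 1` has the sign of `λ`.
-/

open Filter Topology

theorem ofReal_le_spectralRadius_of_mul_pow_le_norm_pow {A : Type*} [NormedRing A]
    [NormedAlgebra ℂ A] [CompleteSpace A] (a : A) {c t : ℝ} (hc : 0 < c) (ht : 0 ≤ t)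
    (h : ∀ n : ℕ, c * t ^ n ≤ ‖a ^ n‖) : ENNReal.ofReal t ≤ spectralRadius ℂ a := by
  have hroot : Tendsto (fun n : ℕ => c ^ (1 / n : ℝ) * t) atTop (𝓝 t) := by
    have := ((Real.continuousAt_const_rpow hc.ne').tendsto.comp
      tendsto_one_div_atTop_nhds_zero_nat).mul_const t
    simpa using this
  refine le_of_tendsto_of_tendsto (ENNReal.tendsto_ofReal hroot)
    (spectrum.pow_norm_pow_one_div_tendsto_nhds_spectralRadius a) ?_
  filter_upwards [eventually_ne_atTop 0] with n hn
  refine ENNReal.ofReal_le_ofReal ?_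
  calc c ^ (1 / n : ℝ) * t = (c * t ^ n) ^ (1 / n : ℝ) := by
        rw [Real.mul_rpow hc.le (by positivity), one_div, Real.pow_rpow_inv_natCast ht hn]
    _ ≤ ‖a ^ n‖ ^ (1 / n : ℝ) := by gcongr; exact h n

section

-- Gelfand's formula and the nonemptiness of spectra need a Banach algebra norm on complex
-- matrices; any one will do.
attribute [local instance] Matrix.linftyOpNormedRing Matrix.linftyOpNormedAlgebra

variable {N : Type*} [Fintype N]

theorem mulVec_apply_le_mulVec_apply {M : Matrix N N ℝ} (hM : ∀ i j, 0 ≤ M i j) {u v : N → ℝ}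
    (huv : ∀ j, u j ≤ v j) (i : N) : (M *ᵥ u) i ≤ (M *ᵥ v) i :=
  Finset.sum_le_sum fun j _ => mul_le_mul_of_nonneg_left (huv j) (hM i j)

theorem mulVec_apply_pos {A : Matrix N N ℝ} (hA : ∀ i j, 0 < A i j) {v : N → ℝ}
    (hv : ∀ j, 0 ≤ v j) (hv0 : v ≠ 0) (i : N) : 0 < (A *ᵥ v) i := by
  obtain ⟨j, hj⟩ := (Pi.lt_def.1 (lt_of_le_of_ne hv (Ne.symm hv0))).2
  exact (mul_pos (hA i j) hj).trans_le
    (Finset.single_le_sum (fun l _ => mul_nonneg (hA i l).le (hv l)) (Finset.mem_univ j))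

theorem norm_mulVec_apply_le {M : Matrix N N ℝ} (hM : ∀ i j, 0 ≤ M i j) (x : N → ℂ) (i : N) :
    ‖(M.map (Complex.ofReal ·) *ᵥ x) i‖ ≤ (M *ᵥ fun j => ‖x j‖) i := by
  refine (norm_sum_le _ _).trans_eq (Finset.sum_congr rfl fun j _ => ?_)
  simp [Complex.norm_real, abs_of_nonneg (hM i j)]

theorem map_ofReal_mulVec (A : Matrix N N ℝ) (y : N → ℝ) :
    (A.map (Complex.ofReal ·) *ᵥ fun j => (y j : ℂ)) = fun i => ((A *ᵥ y) i : ℂ) :=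
  funext fun i => (Complex.ofRealHom.map_mulVec A y i).symm

theorem exists_gt_forall_mul_le [Nonempty N] {z v : N → ℝ} (hz : ∀ i, 0 < z i) {r : ℝ}
    (h : ∀ i, r * z i < v i) : ∃ t, r < t ∧ ∀ i, t * z i ≤ v i := by
  obtain ⟨i, hi⟩ := Finite.exists_min fun j => v j / z j
  exact ⟨v i / z i, (lt_div_iff₀ (hz i)).2 (h i), fun j => (le_div_iff₀ (hz j)).1 (hi j)⟩

theorem exists_lt_forall_le_mul [Nonempty N] {z v : N → ℝ} (hz : ∀ i, 0 < z i) {r : ℝ}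
    (h : ∀ i, v i < r * z i) : ∃ t, t < r ∧ ∀ i, v i ≤ t * z i := by
  obtain ⟨i, hi⟩ := Finite.exists_max fun j => v j / z j
  exact ⟨v i / z i, (div_lt_iff₀ (hz i)).2 (h i), fun j => (div_le_iff₀ (hz j)).1 (hi j)⟩

variable [DecidableEq N]

theorem Matrix.mem_spectrum_iff_exists_mulVec_eq_smul {K : Type*} [Field K] {A : Matrix N N K}
    {μ : K} : μ ∈ spectrum K A ↔ ∃ x ≠ 0, A *ᵥ x = μ • x := by
  rw [← Matrix.spectrum_toLin', ← Module.End.hasEigenvalue_iff_mem_spectrum,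
    Module.End.hasEigenvalue_iff, Submodule.ne_bot_iff]
  simp [and_comm]

theorem Matrix.inv_diagonal_eq_diagonal_inv {K : Type*} [Field K] {d : N → K}
    (hd : ∀ i, d i ≠ 0) : (diagonal d)⁻¹ = diagonal fun i => (d i)⁻¹ :=
  inv_eq_left_inv (by rw [diagonal_mul_diagonal]; simp [inv_mul_cancel₀ (hd _)])

theorem setOf_exists_mem_eq_eq_image {α β : Type*} (S : Set α) (f : α → β) :
    {r | ∃ μ ∈ S, r = f μ} = f '' S := by
  ext; simp [eq_comm]

theorem norm_le_specRad (M : Matrix N N ℝ) {μ : ℂ}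
    (hμ : μ ∈ spectrum ℂ (M.map (Complex.ofReal ·))) : ‖μ‖ ≤ specRad M := by
  rw [specRad, setOf_exists_mem_eq_eq_image]
  exact le_csSup ((Matrix.finite_spectrum _).image _).bddAbove ⟨μ, hμ, rfl⟩

theorem re_le_lamMax (M : Matrix N N ℝ) {μ : ℂ}
    (hμ : μ ∈ spectrum ℂ (M.map (Complex.ofReal ·))) : μ.re ≤ lamMax M := by
  rw [lamMax, setOf_exists_mem_eq_eq_image]
  exact le_csSup ((Matrix.finite_spectrum _).image _).bddAbove ⟨μ, hμ, rfl⟩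

theorem specRad_nonneg (M : Matrix N N ℝ) : 0 ≤ specRad M :=
  Real.sSup_nonneg fun _ ⟨μ, _, h⟩ => h ▸ norm_nonneg μ

theorem exists_mem_spectrum_eq_sSup_image [Nonempty N] (M : Matrix N N ℝ) (f : ℂ → ℝ) :
    ∃ μ ∈ spectrum ℂ (M.map (Complex.ofReal ·)),
      f μ = sSup (f '' spectrum ℂ (M.map (Complex.ofReal ·))) :=
  ((spectrum.nonempty _).image f).csSup_mem ((Matrix.finite_spectrum _).image f)

theorem exists_mem_spectrum_norm_eq_specRad [Nonempty N] (M : Matrix N N ℝ) :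
    ∃ μ ∈ spectrum ℂ (M.map (Complex.ofReal ·)), ‖μ‖ = specRad M := by
  simpa only [specRad, setOf_exists_mem_eq_eq_image] using exists_mem_spectrum_eq_sSup_image M _

theorem exists_mem_spectrum_re_eq_lamMax [Nonempty N] (M : Matrix N N ℝ) :
    ∃ μ ∈ spectrum ℂ (M.map (Complex.ofReal ·)), μ.re = lamMax M := by
  simpa only [lamMax, setOf_exists_mem_eq_eq_image] using exists_mem_spectrum_eq_sSup_image M _

theorem spectralRadius_le_ofReal_specRad (M : Matrix N N ℝ) :
    spectralRadius ℂ (M.map (Complex.ofReal ·)) ≤ ENNReal.ofReal (specRad M) :=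
  iSup₂_le fun μ hμ =>
    (ofReal_norm μ).symm.trans_le (ENNReal.ofReal_le_ofReal (norm_le_specRad M hμ))

theorem ofReal_mem_spectrum_of_mulVec_eq_smul {M : Matrix N N ℝ} {y : N → ℝ} {r : ℝ}
    (hy : y ≠ 0) (h : M *ᵥ y = r • y) : (r : ℂ) ∈ spectrum ℂ (M.map (Complex.ofReal ·)) := by
  refine Matrix.mem_spectrum_iff_exists_mulVec_eq_smul.2
    ⟨fun i => y i, fun h0 => hy (funext fun i => by simpa using congrFun h0 i), funext fun i => ?_⟩
  change (M.map Complex.ofRealHom *ᵥ Complex.ofRealHom ∘ y) i = _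
  rw [← RingHom.map_mulVec, h]
  simp

theorem exists_nonneg_specRad_smul_le_mulVec [Nonempty N] {M : Matrix N N ℝ}
    (hM : ∀ i j, 0 ≤ M i j) :
    ∃ y : N → ℝ, (∀ i, 0 ≤ y i) ∧ y ≠ 0 ∧ ∀ i, specRad M * y i ≤ (M *ᵥ y) i := by
  obtain ⟨μ, hμ, hμρ⟩ := exists_mem_spectrum_norm_eq_specRad M
  obtain ⟨x, hx0, hx⟩ := Matrix.mem_spectrum_iff_exists_mulVec_eq_smul.1 hμ
  refine ⟨fun i => ‖x i‖, fun i => norm_nonneg _, fun h0 => hx0 (funext fun i => ?_),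
    fun i => ?_⟩
  · simpa using congrFun h0 i
  · simpa [hx, ← hμρ] using norm_mulVec_apply_le hM x i

theorem pow_smul_le_pow_mulVec {M : Matrix N N ℝ} (hM : ∀ i j, 0 ≤ M i j) {y : N → ℝ} {t : ℝ}
    (ht : 0 ≤ t) (h : ∀ i, t * y i ≤ (M *ᵥ y) i) (n : ℕ) (i : N) :
    t ^ n * y i ≤ (M ^ n *ᵥ y) i := by
  induction n generalizing i with
  | zero => simp
  | succ n ih =>
    calc t ^ (n + 1) * y i = t ^ n * (t * y i) := by ring
      _ ≤ t ^ n * (M *ᵥ y) i := mul_le_mul_of_nonneg_left (h i) (pow_nonneg ht n)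
      _ = (M *ᵥ (t ^ n • y)) i := by simp [mulVec_smul]
      _ ≤ (M *ᵥ (M ^ n *ᵥ y)) i := mulVec_apply_le_mulVec_apply hM (fun j => ih j) i
      _ = (M ^ (n + 1) *ᵥ y) i := by rw [mulVec_mulVec, pow_succ']

theorem le_specRad_of_smul_le_mulVec {M : Matrix N N ℝ} (hM : ∀ i j, 0 ≤ M i j) {y : N → ℝ}
    (hy : ∀ i, 0 ≤ y i) (hy0 : y ≠ 0) {t : ℝ} (h : ∀ i, t * y i ≤ (M *ᵥ y) i) :
    t ≤ specRad M := by
  rcases lt_or_ge t 0 with ht | ht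
  · exact ht.le.trans (specRad_nonneg M)
  obtain ⟨i, hi⟩ := (Pi.lt_def.1 (lt_of_le_of_ne hy (Ne.symm hy0))).2
  set ŷ : N → ℂ := fun j => y j
  have hŷ : 0 < ‖ŷ‖ := norm_pos_iff.2 fun h0 => hi.ne' (by simpa [ŷ] using congrFun h0 i)
  have hgrowth : ∀ n : ℕ, y i / ‖ŷ‖ * t ^ n ≤ ‖M.map (Complex.ofReal ·) ^ n‖ := fun n => by
    rw [div_mul_eq_mul_div, div_le_iff₀ hŷ]
    calc y i * t ^ n ≤ (M ^ n *ᵥ y) i := by rw [mul_comm]; exact pow_smul_le_pow_mulVec hM ht h n i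
      _ ≤ ‖((M ^ n).map (Complex.ofReal ·) *ᵥ ŷ) i‖ := by
        rw [map_ofReal_mulVec, Complex.norm_real]; exact le_abs_self _
      _ ≤ ‖(M ^ n).map (Complex.ofReal ·) *ᵥ ŷ‖ := norm_le_pi_norm _ i
      _ ≤ ‖(M ^ n).map (Complex.ofReal ·)‖ * ‖ŷ‖ := linfty_opNorm_mulVec _ _
      _ = ‖M.map (Complex.ofReal ·) ^ n‖ * ‖ŷ‖ := by
        rw [show (M ^ n).map (Complex.ofReal ·) = Complex.ofRealHom.mapMatrix (M ^ n) from rfl,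
          map_pow]; rfl
  have := (ofReal_le_spectralRadius_of_mul_pow_le_norm_pow _ (div_pos hi hŷ) ht hgrowth).trans
    (spectralRadius_le_ofReal_specRad M)
  exact (ENNReal.ofReal_le_ofReal_iff (specRad_nonneg M)).1 this

theorem specRad_le_of_mulVec_le_smul [Nonempty N] {M : Matrix N N ℝ} (hM : ∀ i j, 0 ≤ M i j)
    {z : N → ℝ} (hz : ∀ i, 0 < z i) {t : ℝ} (h : ∀ i, (M *ᵥ z) i ≤ t * z i) :
    specRad M ≤ t := by
  obtain ⟨y, hy, hy0, hρy⟩ := exists_nonneg_specRad_smul_le_mulVec hM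
  obtain ⟨j, hj⟩ := (Pi.lt_def.1 (lt_of_le_of_ne hy (Ne.symm hy0))).2
  obtain ⟨i, hi⟩ := Finite.exists_max fun j => y j / z j
  set c := y i / z i
  have hyc : ∀ j, y j ≤ c * z j := fun j => (div_le_iff₀ (hz j)).1 (hi j)
  have hc : 0 < c := pos_of_mul_pos_left (hj.trans_le (hyc j)) (hz j).le
  have hyi : y i = c * z i := by rw [div_mul_cancel₀ _ (hz i).ne']
  refine le_of_mul_le_mul_right ?_ (hyi ▸ mul_pos hc (hz i) : 0 < y i)
  calc specRad M * y i ≤ (M *ᵥ y) i := hρy i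
    _ ≤ (M *ᵥ (c • z)) i := mulVec_apply_le_mulVec_apply hM hyc i
    _ = c * (M *ᵥ z) i := by simp [mulVec_smul]
    _ ≤ c * (t * z i) := mul_le_mul_of_nonneg_left (h i) hc.le
    _ = t * y i := by rw [hyi]; ring

theorem lt_specRad_of_smul_lt_mulVec [Nonempty N] {M : Matrix N N ℝ} (hM : ∀ i j, 0 ≤ M i j)
    {z : N → ℝ} (hz : ∀ i, 0 < z i) {r : ℝ} (h : ∀ i, r * z i < (M *ᵥ z) i) :
    r < specRad M := by
  obtain ⟨t, hrt, ht⟩ := exists_gt_forall_mul_le hz h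
  exact hrt.trans_le (le_specRad_of_smul_le_mulVec hM (fun i => (hz i).le)
    (fun h0 => (hz (Classical.arbitrary N)).ne' (congrFun h0 _)) ht)

theorem specRad_lt_of_mulVec_lt_smul [Nonempty N] {M : Matrix N N ℝ} (hM : ∀ i j, 0 ≤ M i j)
    {z : N → ℝ} (hz : ∀ i, 0 < z i) {r : ℝ} (h : ∀ i, (M *ᵥ z) i < r * z i) :
    specRad M < r := by
  obtain ⟨t, htr, ht⟩ := exists_lt_forall_le_mul hz h
  exact (specRad_le_of_mulVec_le_smul hM hz ht).trans_lt htr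

theorem pow_apply_pos_of_le {C : Matrix N N ℝ} (hC : ∀ i j, 0 ≤ C i j) (hdiag : ∀ i, 0 < C i i)
    {k m : ℕ} (hkm : k ≤ m) {i j : N} (h : 0 < (C ^ k) i j) : 0 < (C ^ m) i j := by
  induction m, hkm using Nat.le_induction with
  | base => exact h
  | succ m _ ih =>
    rw [pow_succ, mul_apply]
    exact (mul_pos ih (hdiag j)).trans_le (Finset.single_le_sum
      (fun l _ => mul_nonneg (pow_apply_nonneg hC m i l) (hC l j)) (Finset.mem_univ j))

theorem Irred.isPrimitive {C : Matrix N N ℝ} (hC : ∀ i j, 0 ≤ C i j)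
    (hdiag : ∀ i, 0 < C i i) (hirr : Irred C) : C.IsPrimitive := by
  choose k hk using hirr
  obtain ⟨K, hK⟩ := Finite.exists_le fun p : N × N => k p.1 p.2
  exact ⟨hC, K + 1, K.succ_pos, fun i j =>
    pow_apply_pos_of_le hC hdiag ((hK (i, j)).trans K.le_succ) (hk i j)⟩

theorem pow_apply_le_pow_apply {M C : Matrix N N ℝ} (hM : ∀ i j, 0 ≤ M i j)
    (hMC : ∀ i j, M i j ≤ C i j) (k : ℕ) (i j : N) : (M ^ k) i j ≤ (C ^ k) i j := by
  induction k generalizing j with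
  | zero => rfl
  | succ k ih =>
    exact Finset.sum_le_sum fun l _ =>
      mul_le_mul (ih l) (hMC l j) (hM l j) ((pow_apply_nonneg hM k i l).trans (ih l))

theorem Irred.mono {M C : Matrix N N ℝ} (hM : ∀ i j, 0 ≤ M i j) (hMC : ∀ i j, M i j ≤ C i j)
    (hirr : Irred M) : Irred C := fun i j =>
  (hirr i j).imp fun k hk => hk.trans_le (pow_apply_le_pow_apply hM hMC k i j)

theorem exists_pos_mulVec_eq_specRad_smul [Nonempty N] {C : Matrix N N ℝ}
    (hC : C.IsPrimitive) : ∃ z : N → ℝ, (∀ i, 0 < z i) ∧ C *ᵥ z = specRad C • z := by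
  obtain ⟨hC, K, -, hK⟩ := hC
  obtain ⟨y, hy, hy0, hρy⟩ := exists_nonneg_specRad_smul_le_mulVec hC
  have hcomm : ∀ v, C *ᵥ (C ^ K *ᵥ v) = C ^ K *ᵥ (C *ᵥ v) := fun v => by
    rw [mulVec_mulVec, mulVec_mulVec, ← pow_succ', ← pow_succ]
  have hz := mulVec_apply_pos hK hy hy0
  have heig : C *ᵥ y = specRad C • y := by
    by_contra hne
    -- otherwise `C ^ K *ᵥ y` is a positive vector on which `C` acts strictly beyond `specRad C`
    have hw := mulVec_apply_pos hK (v := C *ᵥ y - specRad C • y)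
      (fun i => sub_nonneg.2 (hρy i)) (sub_ne_zero.2 hne)
    rw [mulVec_sub, mulVec_smul, ← hcomm] at hw
    refine (lt_specRad_of_smul_lt_mulVec hC hz fun i => ?_).false
    simpa using hw i
  exact ⟨C ^ K *ᵥ y, hz, by rw [hcomm, heig, mulVec_smul]⟩

theorem exists_pos_mulVec_eq_lamMax_smul [Nonempty N] {M : Matrix N N ℝ} (hM : ∀ i j, 0 ≤ M i j)
    (hirr : Irred M) (d : N → ℝ) : ∃ z : N → ℝ, (∀ i, 0 < z i) ∧
      (M - diagonal d) *ᵥ z = lamMax (M - diagonal d) • z := by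
  obtain ⟨c, hc⟩ := Finite.exists_le d
  set B := M - diagonal d
  set C := algebraMap ℝ (Matrix N N ℝ) (c + 1) + B
  have hCdiag : ∀ i, C i i = c + 1 + (M i i - d i) := fun i => by
    simp [C, B, algebraMap_matrix_apply]
  have hCoff : ∀ i j, i ≠ j → C i j = M i j := fun i j h => by
    simp [C, B, h, algebraMap_matrix_apply]
  have hMC : ∀ i j, M i j ≤ C i j := fun i j => by
    rcases eq_or_ne i j with rfl | h
    · linarith [hCdiag i, hc i]
    · exact (hCoff i j h).ge
  have hC : ∀ i j, 0 ≤ C i j := fun i j => (hM i j).trans (hMC i j)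
  have hdiag : ∀ i, 0 < C i i := fun i => by linarith [hCdiag i, hc i, hM i i]
  obtain ⟨z, hz, hCz⟩ := exists_pos_mulVec_eq_specRad_smul ((hirr.mono hM hMC).isPrimitive hC hdiag)
  have hBz : B *ᵥ z = (specRad C - (c + 1)) • z := by
    rw [sub_smul, ← hCz, add_mulVec, Algebra.algebraMap_eq_smul_one, smul_mulVec, one_mulVec,
      add_sub_cancel_left]
  refine ⟨z, hz, ?_⟩
  convert hBz using 2
  apply le_antisymm
  · obtain ⟨μ, hμ, hre⟩ := exists_mem_spectrum_re_eq_lamMax B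
    have hCℂ : C.map (Complex.ofReal ·) =
        algebraMap ℂ _ ((c + 1 : ℝ) : ℂ) + B.map (Complex.ofReal ·) := by
      ext i j; by_cases h : i = j <;> simp [C, h, algebraMap_matrix_apply]
    have hshift : ((c + 1 : ℝ) : ℂ) + μ ∈ spectrum ℂ (C.map (Complex.ofReal ·)) := by
      rw [hCℂ, ← spectrum.singleton_add_eq]; exact Set.add_mem_add rfl hμ
    have := (Complex.re_le_norm _).trans (norm_le_specRad C hshift)
    rw [Complex.add_re, Complex.ofReal_re] at this
    linarith
  · simpa using re_le_lamMax _ (ofReal_mem_spectrum_of_mulVec_eq_smul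
      (fun h0 => (hz (Classical.arbitrary N)).ne' (congrFun h0 _)) hBz)

theorem diagonal_inv_mul_mulVec_eq_add_smul {M : Matrix N N ℝ} {d z : N → ℝ} {ℓ : ℝ}
    (hd : ∀ i, d i ≠ 0) (h : (M - diagonal d) *ᵥ z = ℓ • z) :
    (diagonal (fun i => (d i)⁻¹) * M) *ᵥ z = z + ℓ • fun i => z i / d i := by
  funext i
  have hMz : (M *ᵥ z) i = d i * z i + ℓ * z i := by
    have := congrFun h i
    simp only [sub_mulVec, mulVec_diagonal, Pi.sub_apply, Pi.smul_apply, smul_eq_mul] at this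
    linarith
  have := hd i
  rw [← mulVec_mulVec, mulVec_diagonal, hMz, Pi.add_apply, Pi.smul_apply, smul_eq_mul]
  field_simp

theorem sign_specRad_sub_one_eq_sign [Nonempty N] {A : Matrix N N ℝ} (hA : ∀ i j, 0 ≤ A i j)
    {z w : N → ℝ} (hz : ∀ i, 0 < z i) (hw : ∀ i, 0 < w i) {ℓ : ℝ} (h : A *ᵥ z = z + ℓ • w) :
    SignType.sign (specRad A - 1) = SignType.sign ℓ := by
  have hAz : ∀ i, (A *ᵥ z) i = 1 * z i + ℓ * w i := fun i => by simp [h]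
  rcases lt_trichotomy ℓ 0 with hℓ | rfl | hℓ
  · have hρ := specRad_lt_of_mulVec_lt_smul (r := 1) hA hz fun i => by
      rw [hAz]; linarith [mul_neg_of_neg_of_pos hℓ (hw i)]
    rw [sign_neg hℓ, sign_neg (sub_neg.2 hρ)]
  · have hAz' : ∀ i, (A *ᵥ z) i = 1 * z i := fun i => by rw [hAz]; ring
    rw [sign_zero, sign_eq_zero_iff, sub_eq_zero]
    exact le_antisymm (specRad_le_of_mulVec_le_smul hA hz fun i => (hAz' i).le)
      (le_specRad_of_smul_le_mulVec hA (fun i => (hz i).le)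
        (fun h0 => (hz (Classical.arbitrary N)).ne' (congrFun h0 _)) fun i => (hAz' i).ge)
  · have hρ := lt_specRad_of_smul_lt_mulVec (r := 1) hA hz fun i => by
      rw [hAz]; linarith [mul_pos hℓ (hw i)]
    rw [sign_pos hℓ, sign_pos (sub_pos.2 hρ)]

end

/-- threshold equivalences between ρ(D⁻¹M) and λ_max(M - D). -/
theorem spectralRadius_lambdaMax_threshold {N : Type*} [Fintype N] [DecidableEq N]
    [Nonempty N] (M : Matrix N N ℝ) (d : N → ℝ)
    (hM : ∀ i j, 0 ≤ M i j) (hMirr : Irred M) (hd : ∀ i, 0 < d i) :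
    (1 < specRad ((Matrix.diagonal d)⁻¹ * M) ↔ 0 < lamMax (M - Matrix.diagonal d)) ∧
    (specRad ((Matrix.diagonal d)⁻¹ * M) = 1 ↔ lamMax (M - Matrix.diagonal d) = 0) ∧
    (specRad ((Matrix.diagonal d)⁻¹ * M) < 1 ↔ lamMax (M - Matrix.diagonal d) < 0) := by
  obtain ⟨z, hz, hBz⟩ := exists_pos_mulVec_eq_lamMax_smul hM hMirr d
  rw [inv_diagonal_eq_diagonal_inv fun i => (hd i).ne']
  have hA : ∀ i j, 0 ≤ (diagonal (fun i => (d i)⁻¹) * M) i j := fun i j => by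
    rw [diagonal_mul]
    exact mul_nonneg (inv_nonneg.2 (hd i).le) (hM i j)
  have hAz := diagonal_inv_mul_mulVec_eq_add_smul (fun i => (hd i).ne') hBz
  have hsign := sign_specRad_sub_one_eq_sign hA hz (fun i => div_pos (hz i) (hd i)) hAz
  refine ⟨?_, ?_, ?_⟩
  · rw [← sub_pos, ← sign_eq_one_iff, hsign, sign_eq_one_iff]
  · rw [← sub_eq_zero, ← sign_eq_zero_iff, hsign, sign_eq_zero_iff]
  · rw [← sub_neg, ← sign_eq_neg_one_iff, hsign, sign_eq_neg_one_iff]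
end

section
/- Along trajectories of the multilayer SIR model with s(0) ≫ 0, z(0) > 0, if there exists a time τ_p with R(τ_p) = 1, then the weighted average v(τ_p)^T z(t) attains its maximum over all t ≥ 0 at t = τ_p, where v(τ_p) is the normalized left Perron eigenvector of H(s(τ_p))B_f - D_f. -/
open Matrix BigOperators Set

/-!
Irreducibility of `B_f`, together with `s(τₚ) > 0` (which the equation `ṡ = -s ⊙ (B_f z)`
preserves), makes the nonnegative left eigenvector `v` of `H(s(τₚ)) B_f - D_f` positive.
For `u = D_f v` and the next-generation matrix `K = H(s(τₚ)) D_f⁻¹ B_f` one gets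
`u K = u + λ v`, so `u K ≤ q u` with `q < 1` if `λ < 0` and `u K ≥ q u` with `q > 1` if `λ > 0`.
The first bounds `ρ(K)` above through a left eigenvector, the second bounds it below through
Gelfand's formula; hence `R(τₚ) = 1` forces `λ = 0`, i.e. `vᵀ (H(s(τₚ)) B_f - D_f) = 0`. Then
`d/dt vᵀz = vᵀ (H(s(t)) - H(s(τₚ))) B_f z`, which is `≥ 0` before `τₚ` and `≤ 0` after it because
`s` is nonincreasing and `v, B_f, z ≥ 0`.
-/

theorem le_spectralRadius_of_pow_le_norm_pow {A : Type*} [NormedRing A] [NormedAlgebra ℂ A]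
    [CompleteSpace A] (a : A) {q : ℝ} (hq : 0 ≤ q) (h : ∀ k : ℕ, q ^ k ≤ ‖a ^ k‖) :
    ENNReal.ofReal q ≤ spectralRadius ℂ a := by
  refine ge_of_tendsto (spectrum.pow_norm_pow_one_div_tendsto_nhds_spectralRadius a) ?_
  filter_upwards [Filter.eventually_ne_atTop 0] with k hk
  refine ENNReal.ofReal_le_ofReal ?_
  calc q = (q ^ k) ^ (1 / k : ℝ) := by rw [one_div, Real.pow_rpow_inv_natCast hq hk]
    _ ≤ ‖a ^ k‖ ^ (1 / k : ℝ) := Real.rpow_le_rpow (pow_nonneg hq k) (h k) (by positivity)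

namespace Matrix

variable {N : Type*} [Fintype N]

lemma vecMul_mono_of_nonneg {M : Matrix N N ℝ} (hM : ∀ i j, 0 ≤ M i j) {u w : N → ℝ}
    (h : u ≤ w) : u ᵥ* M ≤ w ᵥ* M :=
  fun j => dotProduct_le_dotProduct_of_nonneg_right h fun i => hM i j

attribute [local instance] Matrix.linftyOpNormedAddCommGroup in
lemma sum_row_le_linfty_opNorm_map_ofReal (A : Matrix N N ℝ) (i : N) :
    ∑ j, A i j ≤ ‖A.map (Complex.ofReal ·)‖ := by
  rw [linfty_opNorm_def]
  calc ∑ j, A i j ≤ ∑ j, ‖A i j‖ := Finset.sum_le_sum fun j _ => Real.le_norm_self _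
    _ = ((∑ j, ‖(A.map (Complex.ofReal ·)) i j‖₊ : NNReal) : ℝ) := by simp
    _ ≤ _ := NNReal.coe_le_coe.2 <|
      Finset.le_sup (f := fun i => ∑ j, ‖(A.map (Complex.ofReal ·)) i j‖₊) (Finset.mem_univ i)

variable [DecidableEq N]

lemma exists_vecMul_eq_smul_of_mem_spectrum {A : Matrix N N ℂ} {μ : ℂ}
    (hμ : μ ∈ spectrum ℂ A) :
    ∃ x ≠ 0, x ᵥ* A = μ • x := by
  rw [spectrum.mem_iff, Matrix.isUnit_iff_isUnit_det, isUnit_iff_ne_zero, not_not,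
    ← exists_vecMul_eq_zero_iff] at hμ
  obtain ⟨x, hx0, hx⟩ := hμ
  refine ⟨x, hx0, ?_⟩
  rw [Algebra.algebraMap_eq_smul_one, vecMul_sub, vecMul_smul, vecMul_one, sub_eq_zero] at hx
  exact hx.symm

lemma norm_le_specRad (M : Matrix N N ℝ) {μ : ℂ}
    (hμ : μ ∈ spectrum ℂ (M.map (Complex.ofReal ·))) : ‖μ‖ ≤ specRad M := by
  refine le_csSup ?_ ⟨μ, hμ, rfl⟩
  refine ((finite_spectrum (M.map (Complex.ofReal ·))).image (fun μ : ℂ => ‖μ‖)).bddAbove.mono ?_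
  rintro _ ⟨μ', hμ', rfl⟩
  exact ⟨μ', hμ', rfl⟩

lemma map_pow_ofReal (M : Matrix N N ℝ) (k : ℕ) :
    (M ^ k).map (Complex.ofReal ·) = M.map (Complex.ofReal ·) ^ k :=
  map_pow (Complex.ofRealHom.mapMatrix) M k

lemma pow_smul_le_vecMul_pow {M : Matrix N N ℝ} (hM : ∀ i j, 0 ≤ M i j) {u : N → ℝ} {q : ℝ}
    (hq : 0 ≤ q) (h : q • u ≤ u ᵥ* M) (k : ℕ) : q ^ k • u ≤ u ᵥ* M ^ k := by
  induction k with
  | zero => simp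
  | succ k ih =>
    calc q ^ (k + 1) • u = q ^ k • (q • u) := by rw [pow_succ, mul_smul]
      _ ≤ q ^ k • (u ᵥ* M) := smul_le_smul_of_nonneg_left h (pow_nonneg hq k)
      _ = (q ^ k • u) ᵥ* M := (smul_vecMul _ _ _).symm
      _ ≤ (u ᵥ* M ^ k) ᵥ* M := vecMul_mono_of_nonneg hM ih
      _ = u ᵥ* M ^ (k + 1) := by rw [vecMul_vecMul, pow_succ]

attribute [local instance] Matrix.linftyOpNormedRing Matrix.linftyOpNormedAlgebra in
lemma le_specRad_of_smul_le_vecMul {M : Matrix N N ℝ} (hM : ∀ i j, 0 ≤ M i j) {u : N → ℝ}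
    (hu : 0 ≤ u) (hu0 : u ≠ 0) {q : ℝ} (hq : 0 ≤ q) (h : q • u ≤ u ᵥ* M) :
    q ≤ specRad M := by
  set Mc := M.map (Complex.ofReal ·)
  obtain ⟨j₀, hj₀⟩ := Function.ne_iff.1 hu0
  have : Nonempty N := ⟨j₀⟩
  have hU : 0 < ∑ j, u j :=
    Finset.sum_pos' (fun i _ => hu i) ⟨j₀, Finset.mem_univ j₀, (hu j₀).lt_of_ne' hj₀⟩
  have hnorm : ∀ k : ℕ, q ^ k ≤ ‖Mc ^ k‖ := by
    intro k
    refine le_of_mul_le_mul_right ?_ hU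
    calc q ^ k * ∑ j, u j = ∑ j, (q ^ k • u) j := by simp [Finset.mul_sum]
      _ ≤ ∑ j, (u ᵥ* M ^ k) j := Finset.sum_le_sum fun j _ => pow_smul_le_vecMul_pow hM hq h k j
      _ = ∑ i, u i * ∑ j, (M ^ k) i j := by
        simp only [vecMul, dotProduct, Finset.mul_sum]; exact Finset.sum_comm
      _ ≤ ∑ i, u i * ‖Mc ^ k‖ := Finset.sum_le_sum fun i _ => mul_le_mul_of_nonneg_left
          (by simpa [Mc, map_pow_ofReal] using sum_row_le_linfty_opNorm_map_ofReal (M ^ k) i) (hu i)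
      _ = ‖Mc ^ k‖ * ∑ j, u j := by rw [← Finset.sum_mul, mul_comm]
  obtain ⟨μ, hμ, hμr⟩ := spectrum.exists_nnnorm_eq_spectralRadius Mc
  have hqμ := le_spectralRadius_of_pow_le_norm_pow Mc hq hnorm
  rw [← hμr, ← ENNReal.ofReal_coe_nnreal, coe_nnnorm,
    ENNReal.ofReal_le_ofReal_iff (norm_nonneg _)] at hqμ
  exact hqμ.trans (norm_le_specRad M hμ)

lemma specRad_le_of_vecMul_le_smul {M : Matrix N N ℝ} (hM : ∀ i j, 0 ≤ M i j)
    {u : N → ℝ} (hu : ∀ i, 0 < u i) {q : ℝ} (hq : 0 ≤ q) (h : u ᵥ* M ≤ q • u) :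
    specRad M ≤ q := by
  refine Real.sSup_le ?_ hq
  rintro _ ⟨μ, hμ, rfl⟩
  obtain ⟨x, hx0, hx⟩ := exists_vecMul_eq_smul_of_mem_spectrum hμ
  obtain ⟨i₀, hi₀⟩ := Function.ne_iff.1 hx0
  obtain ⟨j, -, hj⟩ := Finset.exists_max_image Finset.univ (fun i => ‖x i‖ / u i)
    ⟨i₀, Finset.mem_univ i₀⟩
  set t := ‖x j‖ / u j
  have hxt : ∀ i, ‖x i‖ ≤ t * u i := fun i => (div_le_iff₀ (hu i)).1 (hj i (Finset.mem_univ i))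
  have ht : 0 < t := pos_of_mul_pos_left ((norm_pos_iff.2 hi₀).trans_le (hxt i₀)) (hu i₀).le
  have hxj : ‖x j‖ = t * u j := (div_mul_cancel₀ _ (hu j).ne').symm
  refine le_of_mul_le_mul_right ?_ (mul_pos ht (hu j))
  calc ‖μ‖ * (t * u j) = ‖(x ᵥ* M.map (Complex.ofReal ·)) j‖ := by
        rw [hx, Pi.smul_apply, smul_eq_mul, norm_mul, hxj]
    _ ≤ ∑ i, ‖x i‖ * M i j := by
        refine (norm_sum_le _ _).trans_eq (Finset.sum_congr rfl fun i _ => ?_)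
        simp only [map_apply, norm_mul, Complex.norm_real, Real.norm_of_nonneg (hM i j)]
    _ ≤ ∑ i, t * u i * M i j :=
        Finset.sum_le_sum fun i _ => mul_le_mul_of_nonneg_right (hxt i) (hM i j)
    _ = t * (u ᵥ* M) j := by simp only [vecMul, dotProduct, Finset.mul_sum, mul_assoc]
    _ ≤ t * (q * u j) := mul_le_mul_of_nonneg_left (h j) ht.le
    _ = q * (t * u j) := by ring

lemma pos_of_pos_of_pow_apply_pos {B : Matrix N N ℝ} (hB : ∀ i j, 0 ≤ B i j) {w : N → ℝ}
    (hw : 0 ≤ w) (h : ∀ j, w j = 0 → (w ᵥ* B) j = 0) :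
    ∀ (k : ℕ) {i j : N}, 0 < w i → 0 < (B ^ k) i j → 0 < w j := by
  have step : ∀ {i j}, 0 < w i → 0 < B i j → 0 < w j := by
    intro i j hi hij
    refine (hw j).lt_of_ne' fun hj => ?_
    have : w i * B i j ≤ (w ᵥ* B) j :=
      Finset.single_le_sum (f := fun l => w l * B l j) (fun l _ => mul_nonneg (hw l) (hB l j))
        (Finset.mem_univ i)
    rw [h j hj] at this
    exact (mul_pos hi hij).not_ge this
  intro k
  induction k with
  | zero =>
    intro i j hi hij
    rcases eq_or_ne i j with rfl | hne
    · exact hi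
    · simp [one_apply_ne hne] at hij
  | succ k ih =>
    intro i j hi hij
    rw [pow_succ', mul_apply] at hij
    obtain ⟨l, -, hl⟩ := Finset.exists_lt_of_sum_lt (f := fun _ => (0 : ℝ)) (by simpa using hij)
    have hBil : 0 < B i l := (hB i l).lt_of_ne' fun h0 => by simp [h0] at hl
    exact ih (step hi hBil) (pos_of_mul_pos_right hl (hB i l))

lemma _root_.Irred.pos_of_vecMul_eq_zero {B : Matrix N N ℝ} (hirr : Irred B)
    (hB : ∀ i j, 0 ≤ B i j) {w : N → ℝ} (hw : 0 ≤ w) (hw0 : w ≠ 0)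
    (h : ∀ j, w j = 0 → (w ᵥ* B) j = 0) (j : N) : 0 < w j := by
  obtain ⟨i, hi⟩ := Function.ne_iff.1 hw0
  obtain ⟨k, hk⟩ := hirr i j
  exact pos_of_pos_of_pow_apply_pos hB hw h k ((hw i).lt_of_ne' hi) hk

lemma fromBlocks_diagonal_one {l m : Type*} [DecidableEq l] [DecidableEq m] (w : l → ℝ) :
    fromBlocks (diagonal w) 0 0 (1 : Matrix m m ℝ) = diagonal (Sum.elim w 1) := by
  rw [← diagonal_one, fromBlocks_diagonal]
  rfl

lemma inv_diagonal_of_ne_zero {d : N → ℝ} (hd : ∀ i, d i ≠ 0) :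
    (diagonal d)⁻¹ = diagonal d⁻¹ :=
  inv_eq_right_inv (by simp [diagonal_mul_diagonal, hd])

variable {B : Matrix N N ℝ} {c d v : N → ℝ} {L : ℝ}

lemma vecMul_diagonal_mul_sub_eq_smul_iff :
    v ᵥ* (diagonal c * B - diagonal d) = L • v ↔ (v * c) ᵥ* B = L • v + v * d := by
  have hc : v ᵥ* diagonal c = v * c := funext (vecMul_diagonal v c)
  have hd : v ᵥ* diagonal d = v * d := funext (vecMul_diagonal v d)
  rw [vecMul_sub, ← vecMul_vecMul, hc, hd, sub_eq_iff_eq_add]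

lemma pos_of_vecMul_diagonal_mul_sub_eq_smul (hirr : Irred B) (hB : ∀ i j, 0 ≤ B i j)
    (hc : ∀ i, 0 < c i) (hv : 0 ≤ v) (hv0 : v ≠ 0)
    (hL : v ᵥ* (diagonal c * B - diagonal d) = L • v) (j : N) : 0 < v j := by
  have hvc : 0 ≤ v * c := fun i => mul_nonneg (hv i) (hc i).le
  have hvc0 : v * c ≠ 0 := fun h => hv0 <| funext fun i => by
    simpa [(hc i).ne'] using congrFun h i
  have hzero : ∀ j, (v * c) j = 0 → ((v * c) ᵥ* B) j = 0 := fun j hj => by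
    have hvj : v j = 0 := by simpa [(hc j).ne'] using hj
    simp [vecMul_diagonal_mul_sub_eq_smul_iff.1 hL, hvj]
  exact pos_of_mul_pos_left (hirr.pos_of_vecMul_eq_zero hB hvc hvc0 hzero j) (hc j).le

lemma vecMul_diagonal_mul_inv_diagonal_mul_eq (hd : ∀ i, d i ≠ 0)
    (hL : v ᵥ* (diagonal c * B - diagonal d) = L • v) :
    (d * v) ᵥ* (diagonal c * (diagonal d)⁻¹ * B) = L • v + v * d := by
  have hscale : (d * v) ᵥ* diagonal c ᵥ* diagonal d⁻¹ = v * c := funext fun j => by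
    simp only [vecMul_diagonal, Pi.mul_apply, Pi.inv_apply]
    field_simp [hd j]
  rw [← vecMul_diagonal_mul_sub_eq_smul_iff.1 hL, inv_diagonal_of_ne_zero hd, ← vecMul_vecMul,
    ← vecMul_vecMul, hscale]

/-- With `u = d * v` and `K = diag c · diag d⁻¹ · B` we get `(u K)ⱼ = (1 + L / dⱼ) uⱼ`, so the
sign of `L` decides on which side of `1` the spectral radius of `K` lies. -/
lemma eq_zero_of_vecMul_eq_smul_of_specRad_eq_one [Nonempty N] (hB : ∀ i j, 0 ≤ B i j)
    (hc : 0 ≤ c) (hd : ∀ i, 0 < d i) (hv : ∀ i, 0 < v i)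
    (hL : v ᵥ* (diagonal c * B - diagonal d) = L • v)
    (hR : specRad (diagonal c * (diagonal d)⁻¹ * B) = 1) : L = 0 := by
  set K := diagonal c * (diagonal d)⁻¹ * B
  have hK : ∀ i j, 0 ≤ K i j := fun i j => by
    simp only [K, inv_diagonal_of_ne_zero fun i => (hd i).ne', diagonal_mul_diagonal,
      diagonal_mul]
    exact mul_nonneg (mul_nonneg (hc i) (inv_nonneg.2 (hd i).le)) (hB i j)
  have hu : ∀ j, 0 < (d * v) j := fun j => mul_pos (hd j) (hv j)
  have huK : ∀ j, ((d * v) ᵥ* K) j = (1 + L / d j) * (d * v) j := fun j => by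
    rw [vecMul_diagonal_mul_inv_diagonal_mul_eq (fun i => (hd i).ne') hL]
    simp only [Pi.add_apply, Pi.smul_apply, Pi.mul_apply, smul_eq_mul]
    field_simp [(hd j).ne']
    ring
  have hdD : ∀ j, d j ≤ ‖d‖ := fun j => (Real.le_norm_self _).trans (norm_le_pi_norm d j)
  have hD : 0 < ‖d‖ := (hd (Classical.arbitrary N)).trans_le (hdD _)
  rcases lt_trichotomy L 0 with hneg | hzero | hpos
  · have hq : specRad K ≤ max (1 + L / ‖d‖) 0 := by
      refine specRad_le_of_vecMul_le_smul hK hu (le_max_right _ _) fun j => ?_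
      rw [huK j, Pi.smul_apply, smul_eq_mul]
      refine mul_le_mul_of_nonneg_right (le_max_of_le_left ?_) (hu j).le
      rw [add_le_add_iff_left, div_le_div_iff₀ (hd j) hD]
      nlinarith [hdD j]
    have : L / ‖d‖ < 0 := div_neg_of_neg_of_pos hneg hD
    linarith [max_lt (by linarith : 1 + L / ‖d‖ < 1) one_pos]
  · exact hzero
  · have hq : 1 + L / ‖d‖ ≤ specRad K := by
      refine le_specRad_of_smul_le_vecMul hK (fun j => (hu j).le)
        (fun h => (hu (Classical.arbitrary N)).ne' (congrFun h _)) (by positivity) fun j => ?_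
      rw [huK j, Pi.smul_apply, smul_eq_mul]
      exact mul_le_mul_of_nonneg_right
        ((add_le_add_iff_left 1).2 (div_le_div_of_nonneg_left hpos.le (hd j) (hdD j))) (hu j).le
    have : 0 < L / ‖d‖ := div_pos hpos hD
    linarith

lemma dotProduct_mulVec_diagonal_mul_sub_mono (hB : ∀ i j, 0 ≤ B i j) {z c' : N → ℝ}
    (hv : 0 ≤ v) (hz : 0 ≤ z) (hc : c ≤ c') :
    v ⬝ᵥ ((diagonal c * B - diagonal d) *ᵥ z) ≤ v ⬝ᵥ ((diagonal c' * B - diagonal d) *ᵥ z) := by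
  have hBz : 0 ≤ B *ᵥ z := fun i => dotProduct_nonneg_of_nonneg (fun j => hB i j) hz
  simp only [sub_mulVec, ← mulVec_mulVec, dotProduct_sub, sub_le_sub_iff_right]
  refine dotProduct_le_dotProduct_of_nonneg_left (fun i => ?_) hv
  simp only [mulVec_diagonal]
  exact mul_le_mul_of_nonneg_right (hc i) (hBz i)

end Matrix

lemma hasDerivAt_const_dotProduct {N : Type*} [Fintype N] {z : ℝ → N → ℝ} {z' : N → ℝ} {t : ℝ}
    (v : N → ℝ) (hz : ∀ j, HasDerivAt (fun σ => z σ j) (z' j) t) :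
    HasDerivAt (fun σ => v ⬝ᵥ z σ) (v ⬝ᵥ z') t :=
  HasDerivAt.fun_sum fun j _ => (hz j).const_mul (v j)

lemma le_of_hasDerivAt_nonneg_of_nonpos {f f' : ℝ → ℝ} {τ : ℝ}
    (hf : ∀ t, HasDerivAt f (f' t) t) (hpos : ∀ t < τ, 0 ≤ f' t) (hneg : ∀ t, τ < t → f' t ≤ 0)
    (t : ℝ) : f t ≤ f τ := by
  have hcont : Continuous f := continuous_iff_continuousAt.2 fun t => (hf t).continuousAt
  rcases le_total t τ with ht | ht
  · refine monotoneOn_of_hasDerivWithinAt_nonneg (convex_Iic τ) hcont.continuousOn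
      (fun x _ => (hf x).hasDerivWithinAt) (fun x hx => hpos x ?_) ht self_mem_Iic ht
    simpa using hx
  · refine antitoneOn_of_hasDerivWithinAt_nonpos (convex_Ici τ) hcont.continuousOn
      (fun x _ => (hf x).hasDerivWithinAt) (fun x hx => hneg x ?_) self_mem_Ici ht ht
    simpa using hx

/-- `s * exp (∫₀ᵗ g)` is constant. -/
lemma pos_of_hasDerivAt_neg_mul {s g : ℝ → ℝ} (hg : Continuous g)
    (hs : ∀ t, HasDerivAt s (-s t * g t) t) (h0 : 0 < s 0) (t : ℝ) : 0 < s t := by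
  set G : ℝ → ℝ := fun t => ∫ τ in (0 : ℝ)..t, g τ
  have hG : ∀ t, HasDerivAt G (g t) t := fun t =>
    intervalIntegral.integral_hasDerivAt_right (hg.intervalIntegrable _ _)
      (hg.stronglyMeasurableAtFilter _ _) hg.continuousAt
  have hφ : ∀ t, HasDerivAt (fun t => s t * Real.exp (G t)) 0 t := fun t =>
    ((hs t).fun_mul (hG t).exp).congr_deriv (by ring)
  have hconst := is_const_of_deriv_eq_zero (fun x => (hφ x).differentiableAt)
    (fun x => (hφ x).deriv) t 0
  simp only [G, intervalIntegral.integral_same, Real.exp_zero, mul_one] at hconst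
  exact pos_of_mul_pos_left (hconst ▸ h0) (Real.exp_pos _).le

theorem peak_infection_at_R_eq_one_general (n m : ℕ)
    (Bf : Matrix (Fin n ⊕ Fin m) (Fin n ⊕ Fin m) ℝ) (d : Fin n ⊕ Fin m → ℝ)
    (hBf : ∀ i j, 0 ≤ Bf i j) (hBfirr : Irred Bf) (hd : ∀ i, 0 < d i)
    (s : ℝ → Fin n → ℝ) (z : ℝ → (Fin n ⊕ Fin m) → ℝ)
    (hsdyn : ∀ i t, HasDerivAt (fun τ => s τ i)
      (-(s t i) * ((Bf.mulVec (z t)) (Sum.inl i))) t)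
    (hzdyn : ∀ j t, HasDerivAt (fun σ => z σ j)
      (((Matrix.fromBlocks (Matrix.diagonal (s t)) 0 0 (1 : Matrix (Fin m) (Fin m) ℝ) * Bf
          - Matrix.diagonal d).mulVec (z t)) j) t)
    (hs0 : ∀ i, 0 < s 0 i)
    (hznn : ∀ t j, 0 ≤ z t j)
    (hsmono : ∀ i, ∀ t₁ t₂ : ℝ, t₁ ≤ t₂ → s t₂ i ≤ s t₁ i)
    (τp : ℝ)
    (hR : specRad (Matrix.fromBlocks (Matrix.diagonal (s τp)) 0 0 (1 : Matrix (Fin m) (Fin m) ℝ)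
        * (Matrix.diagonal d)⁻¹ * Bf) = 1)
    (v : Fin n ⊕ Fin m → ℝ)
    (hv : ∀ j, 0 ≤ v j) (hvnorm : ∑ j, v j = 1)
    (hveig : Matrix.vecMul v
        (Matrix.fromBlocks (Matrix.diagonal (s τp)) 0 0 (1 : Matrix (Fin m) (Fin m) ℝ) * Bf
          - Matrix.diagonal d)
      = lamMax (Matrix.fromBlocks (Matrix.diagonal (s τp)) 0 0 (1 : Matrix (Fin m) (Fin m) ℝ) * Bf
          - Matrix.diagonal d) • v) :
    ∀ t : ℝ, 0 ≤ t → v ⬝ᵥ z t ≤ v ⬝ᵥ z τp := by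
  simp only [fromBlocks_diagonal_one] at hzdyn hR hveig
  have hz : Continuous z := continuous_pi fun j =>
    continuous_iff_continuousAt.2 fun t => (hzdyn j t).continuousAt
  have hs_pos : ∀ i, 0 < s τp i := fun i => pos_of_hasDerivAt_neg_mul
    ((continuous_apply _).comp (continuous_const.matrix_mulVec hz)) (hsdyn i) (hs0 i) τp
  have hc_pos : ∀ i, 0 < Sum.elim (s τp) (1 : Fin m → ℝ) i := by
    rintro (i | i)
    exacts [hs_pos i, one_pos]
  have hv0 : v ≠ 0 := by
    rintro rfl
    simp at hvnorm
  obtain ⟨j₀, -⟩ := Function.ne_iff.1 hv0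
  have : Nonempty (Fin n ⊕ Fin m) := ⟨j₀⟩
  have hv_pos := pos_of_vecMul_diagonal_mul_sub_eq_smul hBfirr hBf hc_pos hv hv0 hveig
  have hL := eq_zero_of_vecMul_eq_smul_of_specRad_eq_one hBf (fun i => (hc_pos i).le) hd hv_pos
    hveig hR
  rw [hL, zero_smul] at hveig
  have hpeak : ∀ t, v ⬝ᵥ ((Matrix.diagonal (Sum.elim (s τp) 1) * Bf - Matrix.diagonal d) *ᵥ z t)
      = 0 :=
    fun t => by rw [dotProduct_mulVec, hveig, zero_dotProduct]
  intro t _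
  refine le_of_hasDerivAt_nonneg_of_nonpos
    (fun t => hasDerivAt_const_dotProduct v fun j => hzdyn j t) (fun t ht => ?_) (fun t ht => ?_) t
  · rw [← hpeak t]
    exact dotProduct_mulVec_diagonal_mul_sub_mono hBf hv (hznn t)
      (Sum.elim_le_elim_iff.2 ⟨fun i => hsmono i t τp ht.le, le_rfl⟩)
  · rw [← hpeak t]
    exact dotProduct_mulVec_diagonal_mul_sub_mono hBf hv (hznn t)
      (Sum.elim_le_elim_iff.2 ⟨fun i => hsmono i τp t ht.le, le_rfl⟩)

/-- Theorem 1(iii): if R(τ_p) = 1, the weighted average v(τ_p)ᵀz(t)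
attains its maximum over t ≥ 0 at t = τ_p. -/
theorem peak_infection_at_R_eq_one (n m : ℕ)
    (Bf : Matrix (Fin n ⊕ Fin m) (Fin n ⊕ Fin m) ℝ) (d : Fin n ⊕ Fin m → ℝ)
    (hBf : ∀ i j, 0 ≤ Bf i j) (hBfirr : Irred Bf) (hd : ∀ i, 0 < d i)
    (s : ℝ → Fin n → ℝ) (z : ℝ → (Fin n ⊕ Fin m) → ℝ)
    (hsdyn : ∀ i t, HasDerivAt (fun τ => s τ i)
      (-(s t i) * ((Bf.mulVec (z t)) (Sum.inl i))) t)
    (hzdyn : ∀ j t, HasDerivAt (fun σ => z σ j)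
      (((Matrix.fromBlocks (Matrix.diagonal (s t)) 0 0 (1 : Matrix (Fin m) (Fin m) ℝ) * Bf
          - Matrix.diagonal d).mulVec (z t)) j) t)
    (hs0 : ∀ i, 0 < s 0 i) (hz0 : ∀ j, 0 ≤ z 0 j) (hz0ne : z 0 ≠ 0)
    (hznn : ∀ t j, 0 ≤ z t j) (hsnn : ∀ t i, 0 ≤ s t i)
    (hsmono : ∀ i, ∀ t₁ t₂ : ℝ, t₁ ≤ t₂ → s t₂ i ≤ s t₁ i)
    (τp : ℝ) (hτp : 0 ≤ τp)
    (hR : specRad (Matrix.fromBlocks (Matrix.diagonal (s τp)) 0 0 (1 : Matrix (Fin m) (Fin m) ℝ)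
        * (Matrix.diagonal d)⁻¹ * Bf) = 1)
    (v : Fin n ⊕ Fin m → ℝ)
    (hv : ∀ j, 0 ≤ v j) (hvnorm : ∑ j, v j = 1)
    (hveig : Matrix.vecMul v
        (Matrix.fromBlocks (Matrix.diagonal (s τp)) 0 0 (1 : Matrix (Fin m) (Fin m) ℝ) * Bf
          - Matrix.diagonal d)
      = lamMax (Matrix.fromBlocks (Matrix.diagonal (s τp)) 0 0 (1 : Matrix (Fin m) (Fin m) ℝ) * Bf
          - Matrix.diagonal d) • v) :
    ∀ t : ℝ, 0 ≤ t → v ⬝ᵥ z t ≤ v ⬝ᵥ z τp :=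
  peak_infection_at_R_eq_one_general n m Bf d hBf hBfirr hd s z hsdyn hzdyn hs0 hznn hsmono τp hR v
    hv hvnorm hveig
end
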